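/- If D is a nonzero generalized Euclidean distance matrix and D⁻ is any generalized inverse of D (i.e., DD⁻D = D), then 1'D⁻1 = 1'D†1, where D† is the Moore-Penrose inverse. -/

import Mathlib

/-!
If `1 = D x` and `1ᵀ = yᵀ D`, then every generalized inverse `M` of `D` gives
`1ᵀ M 1 = yᵀ D M D x = yᵀ D x`, a value independent of `M`. So it suffices that `1` lies in the
column spaces of `D` and of `Dᵀ`, i.e. that `1` is orthogonal to the kernels of `Dᵀ` and of `D`;
the Moore-Penrose inverse then supplies `x = D† 1` and `y = D†ᵀ 1`. Since `Dᵀ` is the GEDM with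
`a` and `b` exchanged, only `ker D` needs an argument. For `D w = 0` put `s = 1ᵀ w` and
`t = diag(L)ᵀ w`. Testing `D w = 0` against `1` and using `L 1 = 0` gives
`a² tr(L) s + b² n t = 0`; testing it against `w` gives `(a² + b²) s t = 2ab wᵀ L w ≥ 0`.
Together these give `(a² + b²) a² tr(L) s² ≤ 0`, and `tr L > 0` because `L` is positive
semidefinite and nonzero, so `s = 0`.
-/

open Matrix

def IsMoorePenrose {n : ℕ} (D Dp : Matrix (Fin n) (Fin n) ℝ) : Prop :=
  D * Dp * D = D ∧ Dp * D * Dp = Dp ∧ (D * Dp)ᵀ = D * Dp ∧ (Dp * D)ᵀ = Dp * D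

theorem Matrix.dotProduct_mulVec_eq_of_mul_mul_eq {R m k : Type*} [Fintype m] [Fintype k]
    [NonUnitalSemiring R] {D : Matrix m k R} {M M' : Matrix k m R} (hM : D * M * D = D)
    (hM' : D * M' * D = D) {u : k → R} {v : m → R} (hu : u ∈ Set.range (· ᵥ* D))
    (hv : v ∈ Set.range (D *ᵥ ·)) : u ⬝ᵥ (M *ᵥ v) = u ⬝ᵥ (M' *ᵥ v) := by
  obtain ⟨y, rfl⟩ := hu
  obtain ⟨x, rfl⟩ := hv
  simp only [← dotProduct_mulVec, mulVec_mulVec, ← Matrix.mul_assoc, hM, hM']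

namespace IsMoorePenrose

variable {n : ℕ} {D Dp : Matrix (Fin n) (Fin n) ℝ}

theorem transpose (h : IsMoorePenrose D Dp) : IsMoorePenrose Dᵀ Dpᵀ := by
  obtain ⟨h1, h2, h3, h4⟩ := h
  refine ⟨?_, ?_, ?_, ?_⟩
  · rw [← transpose_mul, ← transpose_mul, ← Matrix.mul_assoc, h1]
  · rw [← transpose_mul, ← transpose_mul, ← Matrix.mul_assoc, h2]
  · rw [← transpose_mul, transpose_transpose, h4]
  · rw [← transpose_mul, transpose_transpose, h3]

theorem mulVec_mulVec_eq_of_forall_dotProduct_eq_zero (h : IsMoorePenrose D Dp)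
    {v : Fin n → ℝ} (hv : ∀ w, Dᵀ *ᵥ w = 0 → v ⬝ᵥ w = 0) : D *ᵥ (Dp *ᵥ v) = v := by
  obtain ⟨h1, -, h3, -⟩ := h
  set r := v - D *ᵥ (Dp *ᵥ v)
  -- `Dᵀ (D Dp) = Dᵀ (D Dp)ᵀ = (D Dp D)ᵀ = Dᵀ`
  have hr : Dᵀ *ᵥ r = 0 := by
    rw [mulVec_sub, mulVec_mulVec, mulVec_mulVec, Matrix.mul_assoc, ← h3, ← transpose_mul,
      h1, sub_self]
  have hrr : r ⬝ᵥ r = 0 := by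
    calc r ⬝ᵥ r = v ⬝ᵥ r - (Dp *ᵥ v) ⬝ᵥ (Dᵀ *ᵥ r) := by
          rw [sub_dotProduct, dotProduct_comm (D *ᵥ _), dotProduct_mulVec, mulVec_transpose,
            dotProduct_comm (r ᵥ* D)]
      _ = 0 := by rw [hv r hr, hr, dotProduct_zero, sub_zero]
  exact (sub_eq_zero.mp (dotProduct_self_eq_zero.mp hrr)).symm

end IsMoorePenrose

section GEDM

variable {n : ℕ} {L D : Matrix (Fin n) (Fin n) ℝ} {a b : ℝ}

/-- Entrywise form of `D = a² L̃ J + b² J L̃ - 2ab L`, where `L̃` is the diagonal part of `L`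
and `J = 11ᵀ`. -/
def IsGEDM (L : Matrix (Fin n) (Fin n) ℝ) (a b : ℝ) (D : Matrix (Fin n) (Fin n) ℝ) : Prop :=
  ∀ i j, D i j = a ^ 2 * L i i + b ^ 2 * L j j - 2 * a * b * L i j

theorem IsGEDM.dotProduct_mulVec (hD : IsGEDM L a b D) (v w : Fin n → ℝ) :
    v ⬝ᵥ (D *ᵥ w) = a ^ 2 * (L.diag ⬝ᵥ v) * (1 ⬝ᵥ w) + b ^ 2 * (1 ⬝ᵥ v) * (L.diag ⬝ᵥ w)
      - 2 * a * b * (v ⬝ᵥ (L *ᵥ w)) := by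
  simp only [mul_assoc (a ^ 2), mul_assoc (b ^ 2), dotProduct, Finset.sum_mul_sum]
  simp only [mulVec, dotProduct, diag_apply, Pi.one_apply, Finset.mul_sum]
  rw [← Finset.sum_add_distrib, ← Finset.sum_sub_distrib]
  refine Finset.sum_congr rfl fun i _ => ?_
  rw [← Finset.sum_add_distrib, ← Finset.sum_sub_distrib]
  refine Finset.sum_congr rfl fun j _ => ?_
  rw [hD i j]
  ring

theorem IsGEDM.transpose (hL : L.IsSymm) (hD : IsGEDM L a b D) : IsGEDM L b a Dᵀ := by
  intro i j
  rw [transpose_apply, hD, hL.apply j i]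
  ring

theorem IsGEDM.one_dotProduct_eq_zero_of_mulVec_eq_zero (hL : L.PosSemidef)
    (hL1 : L *ᵥ 1 = 0) (hL0 : L ≠ 0) (ha : 0 < a) (hb : 0 < b) (hD : IsGEDM L a b D)
    {w : Fin n → ℝ} (hw : D *ᵥ w = 0) : 1 ⬝ᵥ w = 0 := by
  have htr : 0 < L.trace :=
    hL.trace_nonneg.lt_of_ne fun h => hL0 (hL.trace_eq_zero_iff.mp h.symm)
  have hone_L : 1 ⬝ᵥ (L *ᵥ w) = 0 := by
    rw [Matrix.dotProduct_mulVec, ← (isHermitian_iff_isSymm.mp hL.isHermitian).eq,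
      vecMul_transpose, hL1, zero_dotProduct]
  have hlin : a ^ 2 * L.trace * (1 ⬝ᵥ w) + b ^ 2 * n * (L.diag ⬝ᵥ w) = 0 := by
    have := hD.dotProduct_mulVec 1 w
    rw [hw, dotProduct_zero, hone_L, one_dotProduct_one, dotProduct_one] at this
    simpa [trace] using this.symm
  have hquad : 0 ≤ (a ^ 2 + b ^ 2) * (1 ⬝ᵥ w) * (L.diag ⬝ᵥ w) := by
    have := hD.dotProduct_mulVec w w
    have hpsd : 0 ≤ w ⬝ᵥ (L *ᵥ w) := by simpa using hL.dotProduct_mulVec_nonneg w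
    rw [hw, dotProduct_zero] at this
    nlinarith [mul_nonneg (mul_pos ha hb).le hpsd]
  have hsq : (a ^ 2 + b ^ 2) * a ^ 2 * L.trace * (1 ⬝ᵥ w) ^ 2 ≤ 0 := by
    have hn : 0 ≤ b ^ 2 * (n : ℝ) := by positivity
    linear_combination mul_nonneg hquad hn + (a ^ 2 + b ^ 2) * (1 ⬝ᵥ w) * hlin
  have hcoef : 0 < (a ^ 2 + b ^ 2) * a ^ 2 * L.trace := by positivity
  exact pow_eq_zero_iff two_ne_zero |>.mp
    (le_antisymm (nonpos_of_mul_nonpos_right hsq hcoef) (sq_nonneg _))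

end GEDM

theorem stmt12 (n : ℕ) (L D : Matrix (Fin n) (Fin n) ℝ) (hL : L.PosSemidef)
    (hL1 : L *ᵥ (fun _ => (1 : ℝ)) = 0) (hL0 : L ≠ 0)
    (a b : ℝ) (ha : 0 < a) (hb : 0 < b)
    (hD : ∀ i j, D i j = a ^ 2 * L i i + b ^ 2 * L j j - 2 * a * b * L i j)
    (Dp : Matrix (Fin n) (Fin n) ℝ) (hDp : IsMoorePenrose D Dp)
    (Dm : Matrix (Fin n) (Fin n) ℝ) (hDm : D * Dm * D = D) :
    (fun _ => (1 : ℝ)) ⬝ᵥ (Dm *ᵥ fun _ => (1 : ℝ)) =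
      (fun _ => (1 : ℝ)) ⬝ᵥ (Dp *ᵥ fun _ => (1 : ℝ)) := by
  have hgedm : IsGEDM L a b D := hD
  have hker : ∀ w, D *ᵥ w = 0 → 1 ⬝ᵥ w = 0 := fun _ =>
    hgedm.one_dotProduct_eq_zero_of_mulVec_eq_zero hL hL1 hL0 ha hb
  have hgedm_transpose : IsGEDM L b a Dᵀ :=
    hgedm.transpose (isHermitian_iff_isSymm.mp hL.isHermitian)
  have hker_transpose : ∀ w, Dᵀ *ᵥ w = 0 → 1 ⬝ᵥ w = 0 := fun _ =>
    hgedm_transpose.one_dotProduct_eq_zero_of_mulVec_eq_zero hL hL1 hL0 hb ha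
  have hcol : D *ᵥ (Dp *ᵥ 1) = 1 := hDp.mulVec_mulVec_eq_of_forall_dotProduct_eq_zero hker_transpose
  have hrow : (Dpᵀ *ᵥ 1) ᵥ* D = 1 := by
    rw [← mulVec_transpose]
    exact hDp.transpose.mulVec_mulVec_eq_of_forall_dotProduct_eq_zero (by simpa using hker)
  exact dotProduct_mulVec_eq_of_mul_mul_eq hDm hDp.1 ⟨_, hrow⟩ ⟨_, hcol⟩
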